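/- Let (sₖ)_{k≥1} be positive integers, m₀ = b, m₁ = b^{s₁-1}a, m_{k+1} = m_k^{s_{k+1}} m_{k-1}, and m_φ the limit infinite word. The words (m_k^t m_{k-1})' for k ≥ 1, 1 ≤ t ≤ s_{k+1}, ordered lexicographically by (k,t), form an increasing (by the prefix order) sequence of palindromic prefixes of m_φ. -/

import Mathlib

/-- `w.drop2` is the word `w` deprived of its last two letters. -/
def drop2 {A : Type*} (w : List A) : List A := w.dropLast.dropLast

/-- `wordPow w t` is the `t`-fold concatenation `w^t`. -/
def wordPow {A : Type*} (w : List A) (t : ℕ) : List A := (List.replicate t w).flatten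

/-- `l` is a prefix of the infinite word `f : ℕ → A`. -/
def IsPrefixOfInf {A : Type*} (l : List A) (f : ℕ → A) : Prop :=
  l = (List.range l.length).map f

/-!
For `k ≥ 1` write `x = m (k - 1)`, `y = m k` and `c = (y x)'`. By induction on `k`, the central
word `c` is a palindrome, equals `(x y)'`, and satisfies `c ỹ = y c` and `c x̃ = x c`, where `˜`
denotes reversal; these identities pass from `(x, y)` to `(y, y^s x)` with new central word
`y^s c`. Then `(y^(t+1) x)' = y^t c`, which is a palindrome since `c ỹ^t = y^t c`, and
`y^u c` is a prefix of `y^v c` for `u ≤ v` for the same reason. The last of these words,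
`y^s c = (m (k + 1) m k)'`, is a prefix of `m (k + 2)`, hence of `m_φ`.
-/

section

variable {A : Type*}

@[simp]
lemma wordPow_zero (w : List A) : wordPow w 0 = [] := rfl

lemma wordPow_succ (w : List A) (t : ℕ) : wordPow w (t + 1) = w ++ wordPow w t := by
  simp [wordPow, List.replicate_succ]

lemma wordPow_succ' (w : List A) (t : ℕ) : wordPow w (t + 1) = wordPow w t ++ w := by
  simp [wordPow, List.replicate_succ']

@[simp]
lemma wordPow_one (w : List A) : wordPow w 1 = w := by
  simp [wordPow]

lemma wordPow_add (w : List A) (i j : ℕ) : wordPow w (i + j) = wordPow w i ++ wordPow w j := by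
  simp [wordPow, ← List.replicate_append_replicate]

@[simp]
lemma length_wordPow (w : List A) (t : ℕ) : (wordPow w t).length = t * w.length := by
  simp [wordPow]

lemma reverse_wordPow (w : List A) (t : ℕ) : (wordPow w t).reverse = wordPow w.reverse t := by
  simp [wordPow, List.reverse_flatten]

lemma drop2_eq_take (w : List A) : drop2 w = w.take (w.length - 2) := by
  rw [drop2, List.dropLast_eq_take, List.dropLast_eq_take, List.take_take, List.length_take]
  congr 1
  omega

lemma drop2_prefix (w : List A) : drop2 w <+: w := by
  rw [drop2_eq_take]
  exact List.take_prefix _ _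

lemma drop2_append {u v : List A} (hv : 2 ≤ v.length) : drop2 (u ++ v) = u ++ drop2 v := by
  simp only [drop2_eq_take, List.length_append, List.take_append]
  rw [List.take_of_length_le (by omega)]
  congr 2
  omega

lemma drop2_append_pair (u : List A) (x y : A) : drop2 (u ++ [x, y]) = u := by
  simp [drop2_eq_take]

lemma append_wordPow_reverse {p w : List A} (h : p ++ w.reverse = w ++ p) (j : ℕ) :
    p ++ wordPow w.reverse j = wordPow w j ++ p := by
  induction j with
  | zero => simp
  | succ j ih =>
    rw [wordPow_succ, wordPow_succ, ← List.append_assoc, h, List.append_assoc, ih,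
      List.append_assoc]

lemma length_wordPow_append_lt {w : List A} (hw : w ≠ []) (c : List A) {u v : ℕ} (huv : u < v) :
    (wordPow w u ++ c).length < (wordPow w v ++ c).length := by
  have := List.length_pos_iff.mpr hw
  simp only [List.length_append, length_wordPow]
  gcongr

lemma prefix_wordPow_append {w : List A} {n : ℕ} (hn : 1 ≤ n) (x : List A) :
    w <+: wordPow w n ++ x := by
  obtain ⟨n, rfl⟩ := Nat.exists_eq_add_of_le' hn
  rw [wordPow_succ, List.append_assoc]
  exact List.prefix_append _ _

lemma append_prefix_wordPow_append {x w : List A} (hxw : x <+: w) {n : ℕ} (hn : 1 ≤ n) :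
    w ++ x <+: wordPow w n ++ x := by
  obtain ⟨n, rfl⟩ := Nat.exists_eq_add_of_le' hn
  rw [wordPow_succ, List.append_assoc, List.prefix_append_right_inj]
  rcases n with _ | n
  · simp
  · exact hxw.trans (prefix_wordPow_append (Nat.le_add_left 1 n) x)

lemma two_le_length_append {x y : List A} (hx : x ≠ []) (hy : y ≠ []) :
    2 ≤ (x ++ y).length := by
  have := List.length_pos_iff.mpr hx
  have := List.length_pos_iff.mpr hy
  rw [List.length_append]
  omega

lemma IsPrefixOfInf.of_prefix {l l' : List A} {f : ℕ → A} (h : l <+: l')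
    (h' : IsPrefixOfInf l' f) : IsPrefixOfInf l f := by
  obtain ⟨t, rfl⟩ := h
  unfold IsPrefixOfInf at *
  simpa [← List.map_take, List.take_range] using congrArg (List.take l.length) h'

structure CentralPair (x y : List A) : Prop where
  left_ne_nil : x ≠ []
  right_ne_nil : y ≠ []
  reverse_center : (drop2 (y ++ x)).reverse = drop2 (y ++ x)
  drop2_append_comm : drop2 (x ++ y) = drop2 (y ++ x)
  center_append_reverse_right : drop2 (y ++ x) ++ y.reverse = y ++ drop2 (y ++ x)
  center_append_reverse_left : drop2 (y ++ x) ++ x.reverse = x ++ drop2 (y ++ x)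

namespace CentralPair

variable {x y : List A}

lemma drop2_wordPow_append_append (h : CentralPair x y) (n : ℕ) :
    drop2 (wordPow y n ++ x ++ y) = wordPow y n ++ drop2 (y ++ x) := by
  rw [List.append_assoc, drop2_append (two_le_length_append h.left_ne_nil h.right_ne_nil),
    h.drop2_append_comm]

lemma drop2_wordPow_succ_append (h : CentralPair x y) (t : ℕ) :
    drop2 (wordPow y (t + 1) ++ x) = wordPow y t ++ drop2 (y ++ x) := by
  rw [wordPow_succ', List.append_assoc,
    drop2_append (two_le_length_append h.right_ne_nil h.left_ne_nil)]

lemma reverse_wordPow_append_center (h : CentralPair x y) (t : ℕ) :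
    (wordPow y t ++ drop2 (y ++ x)).reverse = wordPow y t ++ drop2 (y ++ x) := by
  rw [List.reverse_append, h.reverse_center, reverse_wordPow,
    append_wordPow_reverse h.center_append_reverse_right]

lemma wordPow_append_center_prefix (h : CentralPair x y) {u v : ℕ} (huv : u ≤ v) :
    wordPow y u ++ drop2 (y ++ x) <+: wordPow y v ++ drop2 (y ++ x) := by
  refine ⟨wordPow y.reverse (v - u), ?_⟩
  rw [List.append_assoc, append_wordPow_reverse h.center_append_reverse_right,
    ← List.append_assoc, ← wordPow_add, Nat.add_sub_cancel' huv]

lemma wordPow_append (h : CentralPair x y) (n : ℕ) : CentralPair y (wordPow y n ++ x) := by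
  have hcenter : drop2 (wordPow y n ++ x ++ y) = wordPow y n ++ drop2 (y ++ x) :=
    h.drop2_wordPow_append_append n
  refine ⟨h.right_ne_nil, by simp [h.left_ne_nil], ?_, ?_, ?_, ?_⟩
  · rw [hcenter, h.reverse_wordPow_append_center]
  · rw [hcenter, ← List.append_assoc, ← wordPow_succ, wordPow_succ', List.append_assoc,
      drop2_append (two_le_length_append h.right_ne_nil h.left_ne_nil)]
  · rw [hcenter, List.reverse_append, reverse_wordPow]
    calc wordPow y n ++ drop2 (y ++ x) ++ (x.reverse ++ wordPow y.reverse n)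
        = wordPow y n ++ ((drop2 (y ++ x) ++ x.reverse) ++ wordPow y.reverse n) := by simp
      _ = wordPow y n ++ x ++ (drop2 (y ++ x) ++ wordPow y.reverse n) := by
        rw [h.center_append_reverse_left]; simp
      _ = wordPow y n ++ x ++ (wordPow y n ++ drop2 (y ++ x)) := by
        rw [append_wordPow_reverse h.center_append_reverse_right]
  · rw [hcenter, List.append_assoc, h.center_append_reverse_right, ← List.append_assoc,
      ← wordPow_succ', wordPow_succ, List.append_assoc]

end CentralPair

lemma centralPair_singleton_replicate (a b : A) (n : ℕ) :
    CentralPair [b] (List.replicate n b ++ [a]) := by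
  have hyx : List.replicate n b ++ [a] ++ [b] = List.replicate n b ++ [a, b] := by simp
  have hxy : [b] ++ (List.replicate n b ++ [a]) = List.replicate n b ++ [b, a] := by
    rw [List.singleton_append, ← List.cons_append, ← List.replicate_succ, List.replicate_succ',
      List.append_assoc, List.singleton_append]
  refine ⟨List.cons_ne_nil _ _, by simp, ?_, ?_, ?_, ?_⟩ <;>
    simp [hyx, hxy, drop2_append_pair, ← List.replicate_succ', List.replicate_succ]

lemma centralPair_of_recurrence {s : ℕ → ℕ} {m : ℕ → List A}
    (h₀ : CentralPair (m 0) (m 1))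
    (hm : ∀ k, 1 ≤ k → m (k + 1) = wordPow (m k) (s (k + 1)) ++ m (k - 1)) :
    ∀ k, 1 ≤ k → CentralPair (m (k - 1)) (m k) := by
  intro k hk
  induction k, hk using Nat.le_induction with
  | base => exact h₀
  | succ k hk ih => rw [Nat.add_sub_cancel, hm k hk]; exact ih.wordPow_append _

end

theorem stmt11_general {A : Type*} (a b : A) (s : ℕ → ℕ) (hs : ∀ k, 1 ≤ s k)
    (m : ℕ → List A) (hm0 : m 0 = [b])
    (hm1 : m 1 = List.replicate (s 1 - 1) b ++ [a])
    (hmr : ∀ k : ℕ, 1 ≤ k → m (k + 1) = wordPow (m k) (s (k + 1)) ++ m (k - 1))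
    (mφ : ℕ → A) (hφ : ∀ k : ℕ, 1 ≤ k → IsPrefixOfInf (m k) mφ) :
    ∀ k : ℕ, 1 ≤ k → ∀ t : ℕ, 1 ≤ t → t ≤ s (k + 1) →
      (drop2 (wordPow (m k) t ++ m (k - 1))).reverse =
        drop2 (wordPow (m k) t ++ m (k - 1)) ∧
      IsPrefixOfInf (drop2 (wordPow (m k) t ++ m (k - 1))) mφ ∧
      (t < s (k + 1) →
        drop2 (wordPow (m k) t ++ m (k - 1)) <+:
          drop2 (wordPow (m k) (t + 1) ++ m (k - 1)) ∧
        (drop2 (wordPow (m k) t ++ m (k - 1))).length <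
          (drop2 (wordPow (m k) (t + 1) ++ m (k - 1))).length) ∧
      (t = s (k + 1) →
        drop2 (wordPow (m k) t ++ m (k - 1)) <+:
          drop2 (wordPow (m (k + 1)) 1 ++ m k) ∧
        (drop2 (wordPow (m k) t ++ m (k - 1))).length <
          (drop2 (wordPow (m (k + 1)) 1 ++ m k)).length) := by
  intro k hk t ht hts
  obtain ⟨t, rfl⟩ := Nat.exists_eq_add_of_le' ht
  have hc : CentralPair (m (k - 1)) (m k) :=
    centralPair_of_recurrence (hm0 ▸ hm1 ▸ centralPair_singleton_replicate a b _) hmr k hk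
  have hnext : drop2 (wordPow (m (k + 1)) 1 ++ m k) =
      wordPow (m k) (s (k + 1)) ++ drop2 (m k ++ m (k - 1)) := by
    rw [wordPow_one, hmr k hk, hc.drop2_wordPow_append_append]
  have hnext_prefix : IsPrefixOfInf (drop2 (wordPow (m (k + 1)) 1 ++ m k)) mφ := by
    refine (hφ (k + 2) (by omega)).of_prefix ((drop2_prefix _).trans ?_)
    rw [wordPow_one, hmr (k + 1) (by omega), Nat.add_sub_cancel]
    refine append_prefix_wordPow_append ?_ (hs _)
    rw [hmr k hk]
    exact prefix_wordPow_append (hs _) _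
  rw [hc.drop2_wordPow_succ_append, hc.drop2_wordPow_succ_append]
  refine ⟨hc.reverse_wordPow_append_center t, ?_, fun _ => ?_, fun _ => ?_⟩
  · exact hnext_prefix.of_prefix (hnext ▸ hc.wordPow_append_center_prefix (by omega))
  · exact ⟨hc.wordPow_append_center_prefix (by omega),
      length_wordPow_append_lt hc.right_ne_nil _ (by omega)⟩
  · rw [hnext]
    exact ⟨hc.wordPow_append_center_prefix (by omega),
      length_wordPow_append_lt hc.right_ne_nil _ (by omega)⟩

/-- Lemma 5.3: the words `(m_k^t m_{k-1})'` for `k ≥ 1`, `1 ≤ t ≤ s_{k+1}`,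
lexicographically ordered by `(k, t)`, form a strictly increasing (for the
prefix order) sequence of palindromic prefixes of the Sturmian word `m_φ`. -/
theorem stmt11 {A : Type*} (a b : A) (hab : a ≠ b) (s : ℕ → ℕ) (hs : ∀ k, 1 ≤ s k)
    (m : ℕ → List A) (hm0 : m 0 = [b])
    (hm1 : m 1 = List.replicate (s 1 - 1) b ++ [a])
    (hmr : ∀ k : ℕ, 1 ≤ k → m (k + 1) = wordPow (m k) (s (k + 1)) ++ m (k - 1))
    (mφ : ℕ → A) (hφ : ∀ k : ℕ, 1 ≤ k → IsPrefixOfInf (m k) mφ) :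
    ∀ k : ℕ, 1 ≤ k → ∀ t : ℕ, 1 ≤ t → t ≤ s (k + 1) →
      (drop2 (wordPow (m k) t ++ m (k - 1))).reverse =
        drop2 (wordPow (m k) t ++ m (k - 1)) ∧
      IsPrefixOfInf (drop2 (wordPow (m k) t ++ m (k - 1))) mφ ∧
      (t < s (k + 1) →
        drop2 (wordPow (m k) t ++ m (k - 1)) <+:
          drop2 (wordPow (m k) (t + 1) ++ m (k - 1)) ∧
        (drop2 (wordPow (m k) t ++ m (k - 1))).length <
          (drop2 (wordPow (m k) (t + 1) ++ m (k - 1))).length) ∧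
      (t = s (k + 1) →
        drop2 (wordPow (m k) t ++ m (k - 1)) <+:
          drop2 (wordPow (m (k + 1)) 1 ++ m k) ∧
        (drop2 (wordPow (m k) t ++ m (k - 1))).length <
          (drop2 (wordPow (m (k + 1)) 1 ++ m k)).length) :=
  stmt11_general a b s hs m hm0 hm1 hmr mφ hφ
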